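/- arXiv:1610.07334 — 5 statements merged into one kernel-verified Lean document; each statement's English description precedes it below -/
import Mathlib

section
/- de Boor–Ron least interpolation space: Let S be a finite set of points in ℝ^s. For z = (z₁,…,z_s) ∈ S let e_z ∈ ℝ[[ξ₁,…,ξ_s]] be the formal power series exp(z₁ξ₁+⋯+z_sξ_s) = Σ_{k≥0} (z₁ξ₁+⋯+z_sξ_s)^k / k!, and let 𝓔 = span_ℝ{e_z : z ∈ S} inside ℝ[[ξ₁,…,ξ_s]]. For a nonzero formal power series f = Σ_{i≥0} f_i, with f_i its homogeneous component of degree i, define f↓ = f_{i₀}, where i₀ = min{i : f_i ≠ 0} (so f↓ is a homogeneous polynomial), and set 0↓ = 0. Then the subspace span_ℝ{f↓ : f ∈ 𝓔} of ℝ[ξ₁,…,ξ_s] is a minimal degree interpolation space with respect to S. -/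
/-!
Pair polynomials with power series by `⟨p, f⟩ = ∑_d d! p_d f_d`, where `d! = ∏ᵢ dᵢ!`. Then
`⟨p, e_z⟩ = p(z)`, so on `𝓔` the functional `⟨p, ·⟩` depends only on the values of `p` on `S`;
and `⟨f↓, f⟩ > 0` for `f ≠ 0`, being a weighted sum of squares.

Every nonzero `g` in the least space is a sum `∑_{k ≤ K} c_k` with `c_K ≠ 0`, where `c_k` is the
homogeneous part of degree `k` of some `u_k ∈ 𝓔` of order `≥ k`. Pairing with `u_K` kills every
polynomial of degree `< K`, in particular every `c_k` with `k < K`, so `⟨g, u_K⟩ = ⟨c_K, u_K⟩ > 0`,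
while `deg g ≤ K`. Hence a nonzero `g` cannot vanish on `S`, and a polynomial agreeing with `g`
on `S` has degree at least `deg g`. For existence, a functional on `ℝ^S` vanishing on the values
of the least space is `⟨·, h⟩` for some `h ∈ 𝓔`, and pairing with `h↓` forces `h = 0`.
-/

open Finset
open scoped Classical

noncomputable section

/-- `L` is an interpolation space with respect to `S ⊆ ℝ^s`. -/
def IsInterpSpace {s : ℕ} (S : Set (Fin s → ℝ)) (L : Submodule ℝ (MvPolynomial (Fin s) ℝ)) :
    Prop :=
  ∀ f : MvPolynomial (Fin s) ℝ, ∃! g : MvPolynomial (Fin s) ℝ,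
    g ∈ L ∧ ∀ z ∈ S, MvPolynomial.eval z g = MvPolynomial.eval z f

/-- `L` is a minimal degree interpolation space with respect to `S ⊆ ℝ^s`. -/
def IsMinDegInterpSpace {s : ℕ} (S : Set (Fin s → ℝ))
    (L : Submodule ℝ (MvPolynomial (Fin s) ℝ)) : Prop :=
  IsInterpSpace S L ∧
    ∀ f g : MvPolynomial (Fin s) ℝ, g ∈ L →
      (∀ z ∈ S, MvPolynomial.eval z g = MvPolynomial.eval z f) →
      g.totalDegree ≤ f.totalDegree

/-- The maximal total degree occurring in a space of polynomials. -/
def degSup {s : ℕ} (L : Submodule ℝ (MvPolynomial (Fin s) ℝ)) : ℕ :=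
  sSup (MvPolynomial.totalDegree '' (L : Set (MvPolynomial (Fin s) ℝ)))

/-- `μ(S)`: the maximal degree of a minimal degree interpolation space with respect to `S`. -/
def mu {s : ℕ} (S : Set (Fin s → ℝ)) : ℕ :=
  sSup (degSup '' {L | IsMinDegInterpSpace S L})

/-- The formal power series `exp(z₁ξ₁ + ⋯ + z_sξ_s) = Σ_k (z₁ξ₁+⋯+z_sξ_s)^k / k!`:
the coefficient of the monomial `ξ^d` comes from the term `k = |d|` of the sum. -/
def expSeries {s : ℕ} (z : Fin s → ℝ) : MvPowerSeries (Fin s) ℝ :=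
  fun d => MvPolynomial.coeff d
      ((∑ i, MvPolynomial.C (z i) * MvPolynomial.X i : MvPolynomial (Fin s) ℝ)
        ^ (d.sum fun _ e => e)) / (Nat.factorial (d.sum fun _ e => e) : ℝ)

/-- The homogeneous component of degree `k` of a formal power series in `s` variables,
as a polynomial. -/
def homComponent {s : ℕ} (f : MvPowerSeries (Fin s) ℝ) (k : ℕ) : MvPolynomial (Fin s) ℝ :=
  ∑ d ∈ Finset.Nat.antidiagonalTuple s k,
    MvPolynomial.monomial (Finsupp.equivFunOnFinite.symm d)
      (MvPowerSeries.coeff (Finsupp.equivFunOnFinite.symm d) f)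

/-- `f↓`: the lowest-degree nonzero homogeneous component of a formal power series
(`0↓ = 0`). -/
def lowComponent {s : ℕ} (f : MvPowerSeries (Fin s) ℝ) : MvPolynomial (Fin s) ℝ :=
  if h : ∃ k, homComponent f k ≠ 0 then homComponent f (Nat.find h) else 0

open MvPolynomial
open scoped Nat

section Apolar

variable {σ R : Type*} [CommSemiring R]

def apolar : MvPolynomial σ R →ₗ[R] MvPowerSeries σ R →ₗ[R] R :=
  (basisMonomials σ R).constr R fun d => (d.prod fun _ n => (n ! : R)) • MvPowerSeries.coeff d

theorem apolar_apply (p : MvPolynomial σ R) (f : MvPowerSeries σ R) :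
    apolar p f = ∑ d ∈ p.support,
      coeff d p * (d.prod fun _ n => (n ! : R)) * MvPowerSeries.coeff d f := by
  simp only [apolar, Module.Basis.constr_apply, Finsupp.sum, LinearMap.sum_apply,
    LinearMap.smul_apply, smul_eq_mul, mul_assoc]
  rfl

theorem apolar_eq_zero_of_totalDegree_lt_order {p : MvPolynomial σ R} {f : MvPowerSeries σ R}
    (h : (p.totalDegree : ℕ∞) < f.order) : apolar p f = 0 := by
  rw [apolar_apply]
  refine Finset.sum_eq_zero fun d hd => ?_
  have hd : (d.degree : ℕ∞) < f.order := (Nat.cast_le.mpr (le_totalDegree hd)).trans_lt h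
  rw [MvPowerSeries.coeff_of_lt_order hd, mul_zero]

end Apolar

section ExpSeries

variable {s : ℕ}

theorem factorial_mul_coeff_expSeries (z : Fin s → ℝ) (d : Fin s →₀ ℕ) :
    (d.prod fun _ n => (n ! : ℝ)) * MvPowerSeries.coeff d (expSeries z) =
      d.prod fun i n => z i ^ n := by
  have hz : (∑ i, C (z i) * X i : MvPolynomial (Fin s) ℝ) = ∑ i, z i • X i := by
    simp only [smul_eq_C_mul]
  have hspec : (d.prod fun _ n => (n ! : ℕ)) * d.multinomial = (d.sum fun _ n => n)! :=
    Nat.multinomial_spec d.support d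
  change _ * (coeff d ((∑ i, C (z i) * X i : MvPolynomial (Fin s) ℝ) ^ _) / _) = _
  rw [hz, coeff_linearCombination_X_pow_of_fintype, if_pos rfl, ← hspec]
  push_cast
  have hfac : (d.prod fun _ n => (n ! : ℝ)) ≠ 0 :=
    (Finset.prod_pos fun i _ => by positivity).ne'
  have hmult : (d.multinomial : ℝ) ≠ 0 := by
    exact_mod_cast (Nat.multinomial_pos d.support d).ne'
  field_simp

theorem apolar_expSeries (p : MvPolynomial (Fin s) ℝ) (z : Fin s → ℝ) :
    apolar p (expSeries z) = eval z p := by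
  rw [apolar_apply, eval_eq]
  exact Finset.sum_congr rfl fun d _ => by rw [mul_assoc, factorial_mul_coeff_expSeries]; rfl

/-- The space `𝓔` of the statement. -/
def expSpan (S : Set (Fin s → ℝ)) : Submodule ℝ (MvPowerSeries (Fin s) ℝ) :=
  Submodule.span ℝ {f | ∃ z ∈ S, f = expSeries z}

theorem apolar_eq_of_eval_eq {S : Set (Fin s → ℝ)} {p q : MvPolynomial (Fin s) ℝ}
    (hpq : ∀ z ∈ S, eval z p = eval z q) {u : MvPowerSeries (Fin s) ℝ} (hu : u ∈ expSpan S) :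
    apolar p u = apolar q u := by
  have hker : expSpan S ≤ LinearMap.ker (apolar p - apolar q) := by
    refine Submodule.span_le.mpr ?_
    rintro _ ⟨z, hz, rfl⟩
    simp [apolar_expSeries, hpq z hz]
  exact sub_eq_zero.mp (hker hu)

theorem exists_mem_expSpan_apolar_eq {S : Set (Fin s → ℝ)} (hS : S.Finite)
    (l : Module.Dual ℝ (S → ℝ)) :
    ∃ h ∈ expSpan S, ∀ p, apolar p h = l fun z => eval (z : Fin s → ℝ) p := by
  have : Fintype S := hS.fintype
  set h := ∑ z : S, l (fun j => if z = j then 1 else 0) • expSeries (z : Fin s → ℝ)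
  have hmem : h ∈ expSpan S := by
    refine Submodule.sum_mem _ fun z _ => Submodule.smul_mem _ _ ?_
    exact Submodule.subset_span ⟨z, z.2, rfl⟩
  refine ⟨h, hmem, fun p => ?_⟩
  rw [LinearMap.pi_apply_eq_sum_univ l, map_sum]
  refine Finset.sum_congr rfl fun z _ => ?_
  rw [map_smul, apolar_expSeries, smul_eq_mul, smul_eq_mul, mul_comm]

end ExpSeries

section HomComponent

variable {s : ℕ}

theorem coeff_homComponent (f : MvPowerSeries (Fin s) ℝ) (k : ℕ) (d : Fin s →₀ ℕ) :
    coeff d (homComponent f k) = if d.degree = k then MvPowerSeries.coeff d f else 0 := by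
  simp only [homComponent, coeff_sum, coeff_monomial, Equiv.symm_apply_eq, Finset.sum_ite_eq',
    Nat.mem_antidiagonalTuple, Equiv.symm_apply_apply, Finsupp.degree_eq_sum]
  rfl

theorem isHomogeneous_homComponent (f : MvPowerSeries (Fin s) ℝ) (k : ℕ) :
    (homComponent f k).IsHomogeneous k := by
  intro d hd
  rw [coeff_homComponent] at hd
  split_ifs at hd with h
  · rw [← h, Finsupp.degree_eq_weight_one]; rfl
  · exact absurd rfl hd

def homComponentₗ (k : ℕ) : MvPowerSeries (Fin s) ℝ →ₗ[ℝ] MvPolynomial (Fin s) ℝ where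
  toFun f := homComponent f k
  map_add' f g := by
    ext d
    simp only [coeff_homComponent, coeff_add, map_add]
    split_ifs <;> simp
  map_smul' a f := by
    ext d
    simp only [coeff_homComponent, coeff_smul, map_smul]
    split_ifs <;> simp

theorem homComponent_eq_zero_of_lt_order {f : MvPowerSeries (Fin s) ℝ} {k : ℕ}
    (hk : (k : ℕ∞) < f.order) : homComponent f k = 0 := by
  ext d
  rw [coeff_homComponent, coeff_zero]
  split_ifs with h
  · exact MvPowerSeries.coeff_of_lt_order (h ▸ hk)
  · rfl

theorem homComponent_order_ne_zero {f : MvPowerSeries (Fin s) ℝ} (hf : f ≠ 0) :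
    homComponent f f.order.toNat ≠ 0 := by
  obtain ⟨d, hd, hdeg⟩ :=
    MvPowerSeries.exists_coeff_ne_zero_and_order (MvPowerSeries.ne_zero_iff_order_finite.mp hf)
  intro h
  have := congrArg (coeff d) h
  rw [coeff_homComponent, if_pos (by rw [← hdeg, ENat.toNat_natCast]), coeff_zero] at this
  exact hd this

theorem lowComponent_eq_homComponent_order (f : MvPowerSeries (Fin s) ℝ) :
    lowComponent f = homComponent f f.order.toNat := by
  unfold lowComponent
  split_ifs with h
  · have hf : f ≠ 0 := by
      rintro rfl
      obtain ⟨k, hk⟩ := h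
      exact hk (map_zero (homComponentₗ k))
    refine congrArg _ ((Nat.find_eq_iff h).mpr ⟨homComponent_order_ne_zero hf, fun k hk => ?_⟩)
    refine not_not.mpr (homComponent_eq_zero_of_lt_order ?_)
    rw [← MvPowerSeries.ne_zero_iff_order_finite.mp hf]
    exact_mod_cast hk
  · push Not at h
    exact (h _).symm

theorem apolar_homComponent_self_pos {f : MvPowerSeries (Fin s) ℝ} {k : ℕ}
    (h : homComponent f k ≠ 0) : 0 < apolar (homComponent f k) f := by
  rw [apolar_apply]
  refine Finset.sum_pos (fun d hd => ?_) (support_nonempty.mpr h)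
  have hfac : 0 < d.prod fun _ n => (n ! : ℝ) := Finset.prod_pos fun i _ => by positivity
  have hd := mem_support_iff.mp hd
  rw [coeff_homComponent] at hd ⊢
  split_ifs at hd ⊢
  · rw [mul_right_comm]; exact mul_pos (mul_self_pos.mpr hd) hfac
  · exact absurd rfl hd

theorem apolar_lowComponent_self_pos {f : MvPowerSeries (Fin s) ℝ} (hf : f ≠ 0) :
    0 < apolar (lowComponent f) f := by
  rw [lowComponent_eq_homComponent_order]
  exact apolar_homComponent_self_pos (homComponent_order_ne_zero hf)

end HomComponent

section LeadingForms

variable {s : ℕ}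

def orderGe {σ R : Type*} [Semiring R] (k : ℕ) : Submodule R (MvPowerSeries σ R) where
  carrier := {f | (k : ℕ∞) ≤ f.order}
  add_mem' hf hg := (le_min hf hg).trans MvPowerSeries.min_order_le_add
  zero_mem' := by simp
  smul_mem' _ _ hf := hf.trans MvPowerSeries.le_order_smul

def leadingForms (E : Submodule ℝ (MvPowerSeries (Fin s) ℝ)) (k : ℕ) :
    Submodule ℝ (MvPolynomial (Fin s) ℝ) :=
  (E ⊓ orderGe k).map (homComponentₗ k)

theorem totalDegree_le_of_mem_leadingForms {E : Submodule ℝ (MvPowerSeries (Fin s) ℝ)} {k : ℕ}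
    {p : MvPolynomial (Fin s) ℝ} (hp : p ∈ leadingForms E k) : p.totalDegree ≤ k := by
  obtain ⟨f, -, rfl⟩ := hp
  exact (isHomogeneous_homComponent f k).totalDegree_le

theorem span_lowComponent_le_iSup_leadingForms (E : Submodule ℝ (MvPowerSeries (Fin s) ℝ)) :
    Submodule.span ℝ (lowComponent '' (E : Set (MvPowerSeries (Fin s) ℝ))) ≤
      ⨆ k, leadingForms E k := by
  refine Submodule.span_le.mpr ?_
  rintro _ ⟨f, hf, rfl⟩
  refine Submodule.mem_iSup_of_mem f.order.toNat ⟨f, ⟨hf, ?_⟩, ?_⟩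
  · exact ENat.natCast_toNat_le_self _
  · exact (lowComponent_eq_homComponent_order f).symm

theorem exists_apolar_ne_zero_of_mem_iSup_leadingForms
    {E : Submodule ℝ (MvPowerSeries (Fin s) ℝ)} {g : MvPolynomial (Fin s) ℝ}
    (hg : g ∈ ⨆ k, leadingForms E k) (hg0 : g ≠ 0) :
    ∃ u ∈ E, (g.totalDegree : ℕ∞) ≤ u.order ∧ apolar g u ≠ 0 := by
  obtain ⟨c, hc, rfl⟩ := (Submodule.mem_iSup_iff_exists_finsupp _ g).mp hg
  have hne : c.support.Nonempty := by
    rw [Finset.nonempty_iff_ne_empty]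
    rintro hempty
    exact hg0 (by rw [Finsupp.sum, hempty, Finset.sum_empty])
  set K := c.support.max' hne
  have hle : ∀ k ∈ c.support, (c k).totalDegree ≤ K := fun k hk =>
    (totalDegree_le_of_mem_leadingForms (hc k)).trans (c.support.le_max' k hk)
  obtain ⟨u, ⟨huE, huK⟩, hu⟩ := hc K
  refine ⟨u, huE, ?_, ?_⟩
  · refine le_trans ?_ huK
    exact_mod_cast (totalDegree_finsetSum _ _).trans (Finset.sup_le hle)
  · rw [Finsupp.sum, map_sum, LinearMap.sum_apply, Finset.sum_eq_single K]
    · have hK : homComponentₗ K u ≠ 0 :=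
        hu ▸ Finsupp.mem_support_iff.mp (c.support.max'_mem hne)
      rw [← hu]
      exact (apolar_homComponent_self_pos hK).ne'
    · intro k hk hkK
      have hlt : (c k).totalDegree < K := (totalDegree_le_of_mem_leadingForms (hc k)).trans_lt
        ((c.support.le_max' k hk).lt_of_ne hkK)
      exact apolar_eq_zero_of_totalDegree_lt_order ((Nat.cast_lt.mpr hlt).trans_le huK)
    · exact fun hK => absurd (c.support.max'_mem hne) hK

end LeadingForms

section LeastSpace

variable {s : ℕ}

/-- The least interpolation space `span {f↓ : f ∈ 𝓔}`. -/
def leastSpace (S : Set (Fin s → ℝ)) : Submodule ℝ (MvPolynomial (Fin s) ℝ) :=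
  Submodule.span ℝ (lowComponent '' (expSpan S : Set (MvPowerSeries (Fin s) ℝ)))

variable {S : Set (Fin s → ℝ)}

theorem exists_apolar_ne_zero_of_mem_leastSpace {g : MvPolynomial (Fin s) ℝ}
    (hg : g ∈ leastSpace S) (hg0 : g ≠ 0) :
    ∃ u ∈ expSpan S, (g.totalDegree : ℕ∞) ≤ u.order ∧ apolar g u ≠ 0 :=
  exists_apolar_ne_zero_of_mem_iSup_leadingForms
    (span_lowComponent_le_iSup_leadingForms (expSpan S) hg) hg0

theorem eq_zero_of_mem_leastSpace_of_eval_eq_zero {g : MvPolynomial (Fin s) ℝ}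
    (hg : g ∈ leastSpace S) (hgS : ∀ z ∈ S, eval z g = 0) : g = 0 := by
  by_contra hg0
  obtain ⟨u, hu, -, hgu⟩ := exists_apolar_ne_zero_of_mem_leastSpace hg hg0
  apply hgu
  rw [apolar_eq_of_eval_eq (q := 0) (by simpa using hgS) hu, map_zero, LinearMap.zero_apply]

theorem totalDegree_le_of_mem_leastSpace {f g : MvPolynomial (Fin s) ℝ} (hg : g ∈ leastSpace S)
    (hgf : ∀ z ∈ S, eval z g = eval z f) : g.totalDegree ≤ f.totalDegree := by
  rcases eq_or_ne g 0 with rfl | hg0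
  · simp
  obtain ⟨u, hu, hgu, hne⟩ := exists_apolar_ne_zero_of_mem_leastSpace hg hg0
  by_contra! hlt
  apply hne
  rw [apolar_eq_of_eval_eq hgf hu]
  exact apolar_eq_zero_of_totalDegree_lt_order ((Nat.cast_lt.mpr hlt).trans_le hgu)

theorem exists_mem_leastSpace_eval_eq (hS : S.Finite)
    (p : MvPolynomial (Fin s) ℝ) : ∃ g ∈ leastSpace S, ∀ z ∈ S, eval z g = eval z p := by
  let ev : MvPolynomial (Fin s) ℝ →ₗ[ℝ] (S → ℝ) :=
    LinearMap.pi fun z => (aeval (z : Fin s → ℝ)).toLinearMap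
  have hrange : LinearMap.range ev ≤ (leastSpace S).map ev := by
    rw [← Subspace.dualAnnihilator_le_dualAnnihilator_iff]
    intro l hl
    rw [Submodule.mem_dualAnnihilator] at hl ⊢
    obtain ⟨h, hE, hh⟩ := exists_mem_expSpan_apolar_eq hS l
    have h0 : h = 0 := by
      by_contra hne
      have hpos := apolar_lowComponent_self_pos hne
      rw [hh] at hpos
      exact hpos.ne' (hl _ (Submodule.mem_map_of_mem (Submodule.subset_span ⟨h, hE, rfl⟩)))
    rintro _ ⟨q, rfl⟩
    exact (hh q).symm.trans (by rw [h0, map_zero])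
  obtain ⟨g, hg, hgp⟩ := hrange ⟨p, rfl⟩
  exact ⟨g, hg, fun z hz => congrFun hgp ⟨z, hz⟩⟩

end LeastSpace

/-- **The de Boor–Ron least interpolation space** is a minimal degree interpolation
space with respect to `S`. -/
theorem deBoor_Ron {s : ℕ} (S : Set (Fin s → ℝ)) (hS : S.Finite)
    (E : Submodule ℝ (MvPowerSeries (Fin s) ℝ))
    (hE : E = Submodule.span ℝ {f | ∃ z ∈ S, f = expSeries z}) :
    IsMinDegInterpSpace S
      (Submodule.span ℝ (lowComponent '' (E : Set (MvPowerSeries (Fin s) ℝ)))) := by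
  subst hE
  refine ⟨fun f => ?_, fun f g hg hgf => totalDegree_le_of_mem_leastSpace hg hgf⟩
  obtain ⟨g, hg, hgf⟩ := exists_mem_leastSpace_eval_eq hS f
  refine ⟨g, ⟨hg, hgf⟩, fun g' ⟨hg', hg'f⟩ => ?_⟩
  refine sub_eq_zero.mp <| eq_zero_of_mem_leastSpace_of_eval_eq_zero (sub_mem hg' hg) ?_
  intro z hz
  rw [map_sub, hg'f z hz, hgf z hz, sub_self]
end
end

section
/- Existence of minimal degree interpolation spaces: For every finite set S of points in ℝ^s there exists a minimal degree interpolation space with respect to S, i.e., a linear subspace 𝓛 of ℝ[ξ₁,…,ξ_s] such that for every polynomial f there is a unique g ∈ 𝓛 with f(z) = g(z) for all z ∈ S, and this g always satisfies deg g ≤ deg f. -/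
open Finset
open scoped Classical

noncomputable section

/-- Given disjoint subspaces `A, B` of `W`, one can extend `A` to a complement of `B` in `W`. -/
lemma exists_compl_between {K : Type*} [Field K] {V : Type*} [AddCommGroup V] [Module K V]
    (A B W : Submodule K V) (hAW : A ≤ W) (hBW : B ≤ W) (hAB : A ⊓ B = ⊥) :
    ∃ L, A ≤ L ∧ L ≤ W ∧ L ⊓ B = ⊥ ∧ L ⊔ B = W := by
  obtain ⟨M, hM⟩ := Submodule.exists_isCompl (A ⊔ B)
  refine ⟨A ⊔ (M ⊓ W), le_sup_left, sup_le hAW inf_le_right, ?_, ?_⟩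
  · rw [eq_bot_iff]
    rintro x ⟨hxL, hxB⟩
    obtain ⟨a, ha, m, hm, rfl⟩ := Submodule.mem_sup.mp hxL
    have hmAB : m ∈ A ⊔ B := by
      have hmre : m = (a + m) - a := by abel
      rw [hmre]
      exact Submodule.sub_mem _ (Submodule.mem_sup_right hxB) (Submodule.mem_sup_left ha)
    have hm0 : m = 0 := by
      have := hM.disjoint
      rw [disjoint_iff] at this
      have : m ∈ (A ⊔ B) ⊓ M := ⟨hmAB, hm.1⟩
      simpa [‹(A ⊔ B) ⊓ M = ⊥›] using this
    have hxA : a + m ∈ A := by simpa [hm0] using ha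
    have : a + m ∈ A ⊓ B := ⟨hxA, hxB⟩
    simpa [hAB] using this
  · refine le_antisymm (sup_le (sup_le hAW inf_le_right) hBW) ?_
    intro v hv
    have htop : A ⊔ B ⊔ M = ⊤ := by
      have := hM.codisjoint; rwa [codisjoint_iff] at this
    have : v ∈ A ⊔ B ⊔ M := by rw [htop]; trivial
    obtain ⟨c, hc, m, hm, rfl⟩ := Submodule.mem_sup.mp this
    have hcW : c ∈ W := sup_le hAW hBW hc
    have hmW : m ∈ W := by
      have hmre : m = (c + m) - c := by abel
      rw [hmre]; exact Submodule.sub_mem _ hv hcW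
    have hmL : m ∈ (A ⊔ (M ⊓ W)) ⊔ B :=
      Submodule.mem_sup_left (Submodule.mem_sup_right ⟨hm, hmW⟩)
    have hcL : c ∈ (A ⊔ (M ⊓ W)) ⊔ B := by
      have hle : A ⊔ B ≤ (A ⊔ (M ⊓ W)) ⊔ B :=
        sup_le (le_sup_left.trans le_sup_left) le_sup_right
      exact hle hc
    exact Submodule.add_mem _ hcL hmL

/-- **Existence of minimal degree interpolation spaces** with respect to any finite set of
points in `ℝ^s`. -/
theorem exists_minDegInterpSpace {s : ℕ} (S : Set (Fin s → ℝ)) (hS : S.Finite) :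
    ∃ L : Submodule ℝ (MvPolynomial (Fin s) ℝ), IsMinDegInterpSpace S L := by
  classical
  set P := MvPolynomial (Fin s) ℝ
  -- the kernel of evaluation on S
  set K : Submodule ℝ P :=
    { carrier := {f | ∀ z ∈ S, MvPolynomial.eval z f = 0}
      add_mem' := fun {a b} ha hb z hz => by rw [map_add, ha z hz, hb z hz, add_zero]
      zero_mem' := fun z _ => map_zero _
      smul_mem' := fun c f hf z hz => by rw [MvPolynomial.smul_eval, hf z hz, mul_zero] } with hK
  have memK : ∀ f : P, f ∈ K ↔ ∀ z ∈ S, MvPolynomial.eval z f = 0 := fun f => Iff.rfl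
  set V : ℕ → Submodule ℝ P := fun n => MvPolynomial.restrictTotalDegree (Fin s) ℝ n with hV
  have memV : ∀ n (f : P), f ∈ V n ↔ f.totalDegree ≤ n := fun n f =>
    MvPolynomial.mem_restrictTotalDegree _ _ _
  -- the invariant
  set Good : ℕ → Submodule ℝ P → Prop :=
    fun n L => L ≤ V n ∧ L ⊓ K = ⊥ ∧ L ⊔ (K ⊓ V n) = V n with hGood
  have step : ∀ n (L : Submodule ℝ P), Good n L → ∃ L', L ≤ L' ∧ Good (n + 1) L' := by
    intro n L ⟨h1, h2, _⟩
    have hLV : L ≤ V (n + 1) := by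
      intro f hf
      exact (memV _ f).mpr (((memV n f).mp (h1 hf)).trans (Nat.le_succ n))
    have hdisj : L ⊓ (K ⊓ V (n + 1)) = ⊥ := by
      rw [eq_bot_iff]; rintro x ⟨hx1, hx2, _⟩
      have : x ∈ L ⊓ K := ⟨hx1, hx2⟩
      simpa [h2] using this
    obtain ⟨L', hA, hW, hd, hs'⟩ :=
      exists_compl_between L (K ⊓ V (n + 1)) (V (n + 1)) hLV inf_le_right hdisj
    refine ⟨L', hA, hW, ?_, hs'⟩
    rw [eq_bot_iff]; rintro x ⟨hx1, hx2⟩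
    have : x ∈ L' ⊓ (K ⊓ V (n + 1)) := ⟨hx1, hx2, hW hx1⟩
    simpa [hd] using this
  have base : ∃ L, Good 0 L := by
    obtain ⟨L, _, hW, hd, hs'⟩ :=
      exists_compl_between ⊥ (K ⊓ V 0) (V 0) bot_le inf_le_right (by simp)
    refine ⟨L, hW, ?_, hs'⟩
    rw [eq_bot_iff]; rintro x ⟨hx1, hx2⟩
    have : x ∈ L ⊓ (K ⊓ V 0) := ⟨hx1, hx2, hW hx1⟩
    simpa [hd] using this
  -- build the chain
  choose st hst1 hst2 using step
  obtain ⟨L0, h0⟩ := base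
  set F : ℕ → Submodule ℝ P := fun n =>
    Nat.rec L0 (fun n L => if h : Good n L then st n L h else L) n with hF
  have hFgood : ∀ n, Good n (F n) := by
    intro n
    induction n with
    | zero => exact h0
    | succ n ih =>
      have : F (n + 1) = st n (F n) (by exact ih) := by
        simp only [hF]; rw [dif_pos ih]
      rw [this]; exact hst2 _ _ _
  have hFmono : Monotone F := by
    apply monotone_nat_of_le_succ
    intro n
    have : F (n + 1) = st n (F n) (hFgood n) := by
      simp only [hF]; rw [dif_pos (hFgood n)]
    rw [this]; exact hst1 _ _ _
  refine ⟨⨆ n, F n, ?_, ?_⟩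
  · -- interpolation space
    intro f
    set n := f.totalDegree
    have hfV : f ∈ V n := (memV n f).mpr le_rfl
    have := (hFgood n).2.2
    have hfmem : f ∈ F n ⊔ (K ⊓ V n) := by rw [this]; exact hfV
    obtain ⟨g, hg, k, hk, hgk⟩ := Submodule.mem_sup.mp hfmem
    refine ⟨g, ⟨Submodule.mem_iSup_of_mem n hg, ?_⟩, ?_⟩
    · intro z hz
      have h := congrArg (MvPolynomial.eval z) hgk
      rw [map_add, hk.1 z hz, add_zero] at h
      exact h
    · rintro g' ⟨hg'L, hg'v⟩
      obtain ⟨m, hm⟩ := (Submodule.mem_iSup_of_chain ⟨F, hFmono⟩ g').mp hg'L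
      have hgL : g ∈ F (max m n) := hFmono (le_max_right m n) hg
      have hg'L2 : g' ∈ F (max m n) := hFmono (le_max_left m n) hm
      have hdiff : g' - g ∈ K := by
        rw [memK]; intro z hz
        have h1 : MvPolynomial.eval z g = MvPolynomial.eval z f := by
          have h := congrArg (MvPolynomial.eval z) hgk
          rw [map_add, hk.1 z hz, add_zero] at h
          exact h
        rw [map_sub, h1, hg'v z hz, sub_self]
      have : g' - g ∈ F (max m n) ⊓ K := ⟨Submodule.sub_mem _ hg'L2 hgL, hdiff⟩
      rw [(hFgood (max m n)).2.1] at this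
      have hz0 : g' - g = 0 := this
      exact sub_eq_zero.mp hz0
  · -- minimal degree
    intro f g hgL hgv
    set n := f.totalDegree
    have hfV : f ∈ V n := (memV n f).mpr le_rfl
    have hfmem : f ∈ F n ⊔ (K ⊓ V n) := by rw [(hFgood n).2.2]; exact hfV
    obtain ⟨g', hg', k, hk, hgk⟩ := Submodule.mem_sup.mp hfmem
    obtain ⟨m, hm⟩ := (Submodule.mem_iSup_of_chain ⟨F, hFmono⟩ g).mp hgL
    have hgF : g ∈ F (max m n) := hFmono (le_max_left m n) hm
    have hg'F : g' ∈ F (max m n) := hFmono (le_max_right m n) hg'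
    have hdiff : g - g' ∈ K := by
      rw [memK]; intro z hz
      have h1 : MvPolynomial.eval z g' = MvPolynomial.eval z f := by
        have h := congrArg (MvPolynomial.eval z) hgk
        rw [map_add, hk.1 z hz, add_zero] at h
        exact h
      rw [map_sub, h1, hgv z hz, sub_self]
    have h0 : g - g' ∈ F (max m n) ⊓ K := ⟨Submodule.sub_mem _ hgF hg'F, hdiff⟩
    rw [(hFgood (max m n)).2.1] at h0
    have : g = g' := by
      have := (Submodule.mem_bot ℝ).mp h0
      exact sub_eq_zero.mp this
    rw [this]
    have : g' ∈ V n := (hFgood n).1 hg'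
    exact (memV n g').mp this
end
end

section
/- Formula for the minimal interpolation degree via truncated exponentials: For every finite set S of points in ℝ^s, μ(S) equals the smallest m ∈ ℕ such that the family of polynomials p_z = Σ_{k=0}^{m} (z₁ξ₁+⋯+z_sξ_s)^k, indexed by z = (z₁,…,z_s) ∈ S, is linearly independent in ℝ[ξ₁,…,ξ_s]. -/
open Finset
open scoped Classical

noncomputable section

/-!
Write `V_m ⊆ ℝ^S` for the value vectors on `S` of polynomials of total degree `≤ m`. The
`ξ^δ`-coefficient of `p_z` is `multinomial δ · z^δ` for `|δ| ≤ m`, so `∑ a_z p_z = 0` iff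
`∑ a_z f(z) = 0` for every `f` of degree `≤ m`; hence the `p_z` are independent iff `V_m = ℝ^S`.
If `N` is the least such `m`, every minimal degree interpolation space has maximal degree exactly
`N`, and one exists: the range of a linear right inverse of evaluation on `S` that maps `V_k`
into polynomials of degree `≤ k` for every `k`, built degree by degree on complements of the
`V_k`.
-/

namespace LinearMap

variable {K M N : Type*} [Field K] [AddCommGroup M] [Module K M] [AddCommGroup N] [Module K N]

theorem exists_section_map (f : M →ₗ[K] N) (P : Submodule K M) :
    ∃ τ : N →ₗ[K] M, ∀ v ∈ P.map f, τ v ∈ P ∧ f (τ v) = v := by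
  obtain ⟨ρ, hρ⟩ := (f.domRestrict P).rangeRestrict.exists_rightInverse_of_surjective
    (range_rangeRestrict _)
  obtain ⟨ρ', hρ'⟩ := exists_extend ρ
  refine ⟨P.subtype ∘ₗ ρ', fun v hv => ⟨(ρ' v).2, ?_⟩⟩
  rw [← range_domRestrict] at hv
  have hρv : ρ' v = ρ ⟨v, hv⟩ := congr($hρ' ⟨v, hv⟩)
  simpa [hρv] using congr(Subtype.val ($hρ ⟨v, hv⟩))

theorem exists_filtered_section (f : M →ₗ[K] N) {P : ℕ → Submodule K M} (hP : Monotone P)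
    (n : ℕ) : ∃ σ : N →ₗ[K] M, ∀ k ≤ n, ∀ v ∈ (P k).map f, σ v ∈ P k ∧ f (σ v) = v := by
  induction n with
  | zero =>
    obtain ⟨τ, hτ⟩ := exists_section_map f (P 0)
    exact ⟨τ, fun k hk => Nat.le_zero.mp hk ▸ hτ⟩
  | succ n ih =>
    obtain ⟨σ, hσ⟩ := ih
    obtain ⟨τ, hτ⟩ := exists_section_map f (P (n + 1))
    obtain ⟨C, hC⟩ := ((P n).map f).exists_isCompl
    set q := ((P n).map f).projection C hC
    -- keep `σ` on the image of `P n` and use `τ` on the complement `C`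
    refine ⟨σ ∘ₗ q + τ ∘ₗ (LinearMap.id - q), fun k hk v hv => ?_⟩
    rcases Nat.of_le_succ hk with hk | rfl
    · have hvn : v ∈ (P n).map f := Submodule.map_mono (hP hk) hv
      simpa [q, Submodule.projection_apply_of_mem_left hC hvn] using hσ k hk v hv
    · have hqv := hσ n le_rfl (q v) (Submodule.projection_apply_mem hC v)
      have hrest : v - q v ∈ (P (n + 1)).map f :=
        sub_mem hv (Submodule.map_mono (hP n.le_succ) (Submodule.projection_apply_mem hC v))
      obtain ⟨hτP, hτf⟩ := hτ _ hrest
      refine ⟨add_mem (hP n.le_succ hqv.1) hτP, ?_⟩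
      change f (σ (q v) + τ (v - q v)) = v
      rw [map_add, hqv.2, hτf, add_sub_cancel]

end LinearMap

theorem Submodule.eq_top_iff_forall_dotProduct_eq_zero {K ι : Type*} [Field K] [Fintype ι]
    (W : Submodule K (ι → K)) : W = ⊤ ↔ ∀ a : ι → K, (∀ v ∈ W, a ⬝ᵥ v = 0) → a = 0 := by
  classical
  rw [← Submodule.dualAnnihilator_eq_bot_iff, Submodule.eq_bot_iff, iff_comm]
  refine (dotProductEquiv K ι).toEquiv.forall_congr fun a => ?_
  simp [Submodule.mem_dualAnnihilator]

namespace MvPolynomial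

section Evaluation

variable {σ K : Type*} [Field K]

def evalOn (S : Set (σ → K)) : MvPolynomial σ K →ₗ[K] S → K :=
  LinearMap.pi fun z => (aeval z.1).toLinearMap

@[simp]
theorem evalOn_apply (S : Set (σ → K)) (f : MvPolynomial σ K) (z : S) :
    evalOn S f z = eval z.1 f :=
  rfl

theorem evalOn_eq_evalOn_iff {S : Set (σ → K)} {f g : MvPolynomial σ K} :
    evalOn S f = evalOn S g ↔ ∀ z ∈ S, eval z f = eval z g := by
  rw [_root_.funext_iff]
  simp only [evalOn_apply, Subtype.forall]

def evalRange (S : Set (σ → K)) (m : ℕ) : Submodule K (S → K) :=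
  (restrictTotalDegree σ K m).map (evalOn S)

theorem monotone_restrictTotalDegree {R : Type*} [CommSemiring R] :
    Monotone (restrictTotalDegree σ R) := fun _ _ hmn _ hp =>
  (mem_restrictTotalDegree _ _ _).2 (((mem_restrictTotalDegree _ _ _).1 hp).trans hmn)

theorem evalOn_mem_evalRange (S : Set (σ → K)) {f : MvPolynomial σ K} {m : ℕ}
    (hf : f.totalDegree ≤ m) : evalOn S f ∈ evalRange S m :=
  ⟨f, (mem_restrictTotalDegree _ _ _).2 hf, rfl⟩

theorem exists_eval_eq_one_and_eq_zero (T : Finset (σ → K)) (z₀ : σ → K) :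
    ∃ f : MvPolynomial σ K, eval z₀ f = 1 ∧ ∀ z ∈ T, z ≠ z₀ → eval z f = 0 := by
  have hfactor (z : σ → K) : ∃ g : MvPolynomial σ K, eval z₀ g = 1 ∧ (z ≠ z₀ → eval z g = 0) := by
    by_cases hz : z = z₀
    · exact ⟨1, map_one _, fun h => absurd hz h⟩
    obtain ⟨i, hi⟩ := Function.ne_iff.mp hz
    refine ⟨C (z₀ i - z i)⁻¹ * (X i - C (z i)), ?_, fun _ => by simp⟩
    simp [inv_mul_cancel₀ (sub_ne_zero.mpr (Ne.symm hi))]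
  choose g hg using hfactor
  refine ⟨∏ z ∈ T, g z, by simp [(hg _).1], fun z hz hne => ?_⟩
  rw [map_prod]
  exact prod_eq_zero hz ((hg z).2 hne)

theorem exists_evalRange_eq_top (S : Set (σ → K)) [Fintype S] : ∃ m, evalRange S m = ⊤ := by
  choose f hf using fun z₀ : S => exists_eval_eq_one_and_eq_zero S.toFinset z₀.1
  refine ⟨univ.sup fun z => (f z).totalDegree, eq_top_iff.2 ?_⟩
  rw [← (Pi.basisFun K S).span_eq, Submodule.span_le]
  rintro _ ⟨z₀, rfl⟩
  rw [SetLike.mem_coe]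
  convert evalOn_mem_evalRange S (le_sup (f := fun z => (f z).totalDegree) (mem_univ z₀))
    using 1
  ext z
  by_cases hz : z = z₀
  · simp [hz, (hf z₀).1]
  · simp [hz, (hf z₀).2 z.1 (by simp) (fun h => hz (Subtype.ext h))]

end Evaluation

variable {σ K : Type*} [Fintype σ] [Field K]

def truncExp (m : ℕ) (z : σ → K) : MvPolynomial σ K :=
  ∑ k ∈ range (m + 1), (∑ i, C (z i) * X i) ^ k

theorem coeff_truncExp (m : ℕ) (z : σ → K) (δ : σ →₀ ℕ) :
    coeff δ (truncExp m z) =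
      if (δ.sum fun _ e => e) ≤ m then δ.multinomial * eval z (monomial δ 1) else 0 := by
  simp only [truncExp, coeff_sum, ← smul_eq_C_mul, coeff_linearCombination_X_pow_of_fintype,
    eval_monomial, one_mul, sum_ite_eq, mem_range, Nat.lt_succ_iff]

theorem sum_smul_truncExp_eq_zero_iff [CharZero K] {ι : Type*} [Fintype ι] (a : ι → K)
    (z : ι → σ → K) (m : ℕ) :
    ∑ i, a i • truncExp m (z i) = 0 ↔
      ∀ f : MvPolynomial σ K, f.totalDegree ≤ m → ∑ i, a i * eval (z i) f = 0 := by
  have hcoeff (δ : σ →₀ ℕ) : coeff δ (∑ i, a i • truncExp m (z i)) =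
      if (δ.sum fun _ e => e) ≤ m then
        δ.multinomial * ∑ i, a i * eval (z i) (monomial δ 1) else 0 := by
    simp only [coeff_sum, coeff_smul, coeff_truncExp, smul_eq_mul, mul_ite, mul_zero]
    split_ifs
    · simp only [mul_sum]
      exact sum_congr rfl fun _ _ => by ring
    · simp
  constructor
  · intro h f hf
    have hmonomial (δ) (hδ : δ ∈ f.support) : ∑ i, a i * eval (z i) (monomial δ 1) = 0 := by
      have := hcoeff δ
      rw [h, coeff_zero, if_pos ((le_totalDegree hδ).trans hf), eq_comm] at this
      exact (mul_eq_zero.mp this).resolve_left (Nat.cast_ne_zero.mpr (Nat.multinomial_pos _ _).ne')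
    calc ∑ i, a i * eval (z i) f
        = ∑ δ ∈ f.support, coeff δ f * ∑ i, a i * eval (z i) (monomial δ 1) := by
          conv_lhs => rw [f.as_sum]
          simp only [map_sum, eval_monomial, mul_sum, one_mul]
          rw [sum_comm]
          refine sum_congr rfl fun _ _ => sum_congr rfl fun _ _ => by ring
      _ = 0 := sum_eq_zero fun δ hδ => by rw [hmonomial δ hδ, mul_zero]
  · intro h
    ext δ
    rw [hcoeff, coeff_zero]
    split_ifs with hδ
    · rw [h _ ((totalDegree_monomial _ one_ne_zero).trans_le hδ), mul_zero]
    · rfl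

theorem linearIndependent_truncExp_iff [CharZero K] (S : Set (σ → K)) [Fintype S] (m : ℕ) :
    LinearIndependent K (fun z : S => truncExp m z.1) ↔ evalRange S m = ⊤ := by
  rw [Fintype.linearIndependent_iff, evalRange, Submodule.eq_top_iff_forall_dotProduct_eq_zero]
  refine forall_congr' fun a => ?_
  have hmoments : (∀ v ∈ (restrictTotalDegree σ K m).map (evalOn S), a ⬝ᵥ v = 0) ↔
      ∀ f : MvPolynomial σ K, f.totalDegree ≤ m → ∑ z, a z * eval z.1 f = 0 := by
    simp only [Submodule.mem_map, forall_exists_index, and_imp, forall_apply_eq_imp_iff₂,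
      dotProduct, evalOn_apply, mem_restrictTotalDegree]
  rw [sum_smul_truncExp_eq_zero_iff, hmoments, _root_.funext_iff]
  rfl

end MvPolynomial

section MinimalDegreeInterpolation

open MvPolynomial

variable {s : ℕ} {S : Set (Fin s → ℝ)} {L : Submodule ℝ (MvPolynomial (Fin s) ℝ)} {N : ℕ}

theorem IsMinDegInterpSpace.totalDegree_le (hL : IsMinDegInterpSpace S L)
    (hN : evalRange S N = ⊤) {g : MvPolynomial (Fin s) ℝ} (hg : g ∈ L) : g.totalDegree ≤ N := by
  obtain ⟨f, hf, hfg⟩ : evalOn S g ∈ evalRange S N := hN ▸ Submodule.mem_top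
  exact (hL.2 f g hg (evalOn_eq_evalOn_iff.1 hfg.symm)).trans ((mem_restrictTotalDegree _ _ _).1 hf)

theorem IsMinDegInterpSpace.degSup_eq (hL : IsMinDegInterpSpace S L)
    (hN : IsLeast {m | evalRange S m = ⊤} N) : degSup L = N := by
  have hle (g) (hg : g ∈ L) : g.totalDegree ≤ N := hL.totalDegree_le hN.1 hg
  have hbdd : BddAbove (totalDegree '' (L : Set (MvPolynomial (Fin s) ℝ))) :=
    ⟨N, by rintro _ ⟨g, hg, rfl⟩; exact hle g hg⟩
  refine le_antisymm (csSup_le ⟨0, 0, L.zero_mem, totalDegree_zero⟩ ?_) (hN.2 ?_)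
  · rintro _ ⟨g, hg, rfl⟩
    exact hle g hg
  · refine eq_top_iff.2 fun v _ => ?_
    obtain ⟨f, -, rfl⟩ : v ∈ evalRange S N := hN.1 ▸ Submodule.mem_top
    obtain ⟨g, ⟨hg, hgf⟩, -⟩ := hL.1 f
    rw [← evalOn_eq_evalOn_iff.2 hgf]
    exact evalOn_mem_evalRange S (le_csSup hbdd ⟨g, hg, rfl⟩)

theorem exists_isMinDegInterpSpace (hN : evalRange S N = ⊤) : ∃ L, IsMinDegInterpSpace S L := by
  obtain ⟨ρ, hρ⟩ := LinearMap.exists_filtered_section (evalOn S) monotone_restrictTotalDegree N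
  have hvalues (v : S → ℝ) : ρ v ∈ restrictTotalDegree (Fin s) ℝ N ∧ evalOn S (ρ v) = v :=
    hρ N le_rfl v (show v ∈ evalRange S N from hN ▸ Submodule.mem_top)
  have hρ_eq {f g : MvPolynomial (Fin s) ℝ} (hg : g ∈ LinearMap.range ρ)
      (hgf : ∀ z ∈ S, eval z g = eval z f) : g = ρ (evalOn S f) := by
    obtain ⟨v, rfl⟩ := hg
    rw [← evalOn_eq_evalOn_iff.2 hgf, (hvalues v).2]
  refine ⟨LinearMap.range ρ, fun f => ⟨ρ (evalOn S f), ⟨LinearMap.mem_range_self _ _,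
    evalOn_eq_evalOn_iff.1 (hvalues _).2⟩, fun g hg => hρ_eq hg.1 hg.2⟩, fun f g hg hgf => ?_⟩
  rw [hρ_eq hg hgf]
  rcases le_total f.totalDegree N with hf | hf
  · exact (mem_restrictTotalDegree _ _ _).1 (hρ _ hf _ (evalOn_mem_evalRange S le_rfl)).1
  · exact ((mem_restrictTotalDegree _ _ _).1 (hvalues _).1).trans hf

theorem mu_eq_of_isLeast (hN : IsLeast {m | evalRange S m = ⊤} N) : mu S = N := by
  obtain ⟨L, hL⟩ := exists_isMinDegInterpSpace hN.1
  have hdegSup : degSup '' {L | IsMinDegInterpSpace S L} = {N} :=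
    Set.eq_singleton_iff_unique_mem.2
      ⟨⟨L, hL, hL.degSup_eq hN⟩, by rintro _ ⟨L', hL', rfl⟩; exact hL'.degSup_eq hN⟩
  rw [mu, hdegSup, csSup_singleton]

end MinimalDegreeInterpolation

/-- **Formula for the minimal interpolation degree via truncated exponentials**:
`μ(S)` is the least `m` such that the truncated exponential polynomials
`Σ_{k=0}^m (z₁ξ₁+⋯+z_sξ_s)^k`, for `z ∈ S`, are linearly independent. -/
theorem mu_eq_least_linearIndependent {s : ℕ} (S : Set (Fin s → ℝ)) (hS : S.Finite) :
    IsLeast {m : ℕ | LinearIndependent ℝ fun z : S =>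
      ∑ k ∈ Finset.range (m + 1),
        (∑ i, MvPolynomial.C (z.1 i) * MvPolynomial.X i : MvPolynomial (Fin s) ℝ) ^ k}
      (mu S) := by
  have := hS.fintype
  have hset : {m : ℕ | LinearIndependent ℝ fun z : S => MvPolynomial.truncExp m z.1} =
      {m | MvPolynomial.evalRange S m = ⊤} :=
    Set.ext fun m => MvPolynomial.linearIndependent_truncExp_iff S m
  obtain ⟨m, hm⟩ := MvPolynomial.exists_evalRange_eq_top S
  have hN := isLeast_csInf (⟨m, hm⟩ : {m | MvPolynomial.evalRange S m = ⊤}.Nonempty)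
  rw [mu_eq_of_isLeast hN]
  exact hset ▸ hN
end
end

section
/- Invariance of the minimal interpolation degree under linear automorphisms: If S is a finite set of points in ℝ^s and σ : ℝ^s → ℝ^s is an invertible linear map, then μ(σ(S)) = μ(S). -/
open Finset
open scoped Classical

noncomputable section

namespace MuInv

open MvPolynomial

variable {s : ℕ}

/-- Composition with a polynomial substitution by degree-≤1 polynomials does not
increase total degree. -/
lemma totalDegree_aeval_le (g : Fin s → MvPolynomial (Fin s) ℝ)
    (hg : ∀ j, (g j).totalDegree ≤ 1) (f : MvPolynomial (Fin s) ℝ) :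
    (aeval g f).totalDegree ≤ f.totalDegree := by
  conv_lhs => rw [f.as_sum, map_sum]
  refine totalDegree_finsetSum_le fun v hv => ?_
  rw [aeval_monomial]
  refine (totalDegree_mul _ _).trans ?_
  have h1 : (algebraMap ℝ (MvPolynomial (Fin s) ℝ) (coeff v f)).totalDegree = 0 :=
    totalDegree_C _
  rw [h1, zero_add]
  refine le_trans ?_ (le_totalDegree hv)
  rw [Finsupp.prod]
  refine (totalDegree_finset_prod _ _).trans ?_
  rw [Finsupp.sum]
  refine Finset.sum_le_sum fun i _ => ?_
  calc (g i ^ v i).totalDegree ≤ v i * (g i).totalDegree := totalDegree_pow _ _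
    _ ≤ v i * 1 := Nat.mul_le_mul_left _ (hg i)
    _ = v i := Nat.mul_one _

/-- The substitution morphism associated to a linear map. -/
def Phi (τ : (Fin s → ℝ) →ₗ[ℝ] (Fin s → ℝ)) :
    MvPolynomial (Fin s) ℝ →ₐ[ℝ] MvPolynomial (Fin s) ℝ :=
  aeval (fun j => ∑ i, C (τ (fun k => if i = k then 1 else 0) j) * X i)

lemma eval_Phi (τ : (Fin s → ℝ) →ₗ[ℝ] (Fin s → ℝ)) (f : MvPolynomial (Fin s) ℝ)
    (z : Fin s → ℝ) : eval z (Phi τ f) = eval (τ z) f := by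
  induction f using MvPolynomial.induction_on with
  | C a => simp [Phi]
  | add p q hp hq => simp [map_add, hp, hq]
  | mul_X p i hp =>
    simp only [map_mul, hp, Phi, aeval_X, map_sum, eval_mul, eval_C, eval_X]
    congr 1
    rw [LinearMap.pi_apply_eq_sum_univ τ z]
    simp [mul_comm]

lemma totalDegree_Phi_le (τ : (Fin s → ℝ) →ₗ[ℝ] (Fin s → ℝ)) (f : MvPolynomial (Fin s) ℝ) :
    (Phi τ f).totalDegree ≤ f.totalDegree := by
  refine totalDegree_aeval_le _ (fun j => ?_) f
  refine totalDegree_finsetSum_le fun i _ => ?_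
  refine (totalDegree_mul _ _).trans ?_
  simp [totalDegree_C, totalDegree_X]

lemma Phi_symm_Phi (σ : (Fin s → ℝ) ≃ₗ[ℝ] (Fin s → ℝ)) (f : MvPolynomial (Fin s) ℝ) :
    Phi σ.symm.toLinearMap (Phi σ.toLinearMap f) = f := by
  apply MvPolynomial.funext
  intro z
  rw [eval_Phi, eval_Phi]
  simp

lemma Phi_Phi_symm (σ : (Fin s → ℝ) ≃ₗ[ℝ] (Fin s → ℝ)) (f : MvPolynomial (Fin s) ℝ) :
    Phi σ.toLinearMap (Phi σ.symm.toLinearMap f) = f := by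
  apply MvPolynomial.funext
  intro z
  rw [eval_Phi, eval_Phi]
  simp

lemma totalDegree_Phi (σ : (Fin s → ℝ) ≃ₗ[ℝ] (Fin s → ℝ)) (f : MvPolynomial (Fin s) ℝ) :
    (Phi σ.toLinearMap f).totalDegree = f.totalDegree := by
  refine le_antisymm (totalDegree_Phi_le _ f) ?_
  conv_lhs => rw [← Phi_symm_Phi σ f]
  exact totalDegree_Phi_le _ _

lemma Phi_injective (σ : (Fin s → ℝ) ≃ₗ[ℝ] (Fin s → ℝ)) :
    Function.Injective (Phi (s := s) σ.toLinearMap) := by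
  intro a b h
  have := congrArg (Phi σ.symm.toLinearMap) h
  rwa [Phi_symm_Phi, Phi_symm_Phi] at this

/-- Transport of a minimal degree interpolation space along a linear automorphism. -/
lemma transport (S : Set (Fin s → ℝ)) (σ : (Fin s → ℝ) ≃ₗ[ℝ] (Fin s → ℝ))
    (L : Submodule ℝ (MvPolynomial (Fin s) ℝ)) (hL : IsMinDegInterpSpace S L) :
    ∃ L', IsMinDegInterpSpace (σ '' S) L' ∧ degSup L' = degSup L := by
  set Φ := Phi (s := s) σ.toLinearMap with hΦ
  refine ⟨L.comap Φ.toLinearMap, ⟨?_, ?_⟩, ?_⟩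
  · -- interpolation
    intro f
    obtain ⟨g, ⟨hgL, hgev⟩, hguniq⟩ := hL.1 (Φ f)
    refine ⟨Phi σ.symm.toLinearMap g, ⟨?_, ?_⟩, ?_⟩
    · simpa [Submodule.mem_comap, hΦ, Phi_Phi_symm] using hgL
    · rintro w ⟨z, hz, rfl⟩
      rw [eval_Phi]
      simp only [LinearEquiv.coe_coe, LinearEquiv.symm_apply_apply]
      have := hgev z hz
      rw [eval_Phi] at this
      simpa using this
    · intro y ⟨hyL, hyev⟩
      have : Φ y = g := by
        refine hguniq (Φ y) ⟨hyL, fun z hz => ?_⟩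
        rw [hΦ, eval_Phi, eval_Phi]
        exact hyev (σ z) ⟨z, hz, rfl⟩
      rw [← this, hΦ, Phi_symm_Phi]
  · -- minimal degree
    intro f g hgL hgev
    have h1 : ∀ z ∈ S, eval z (Φ g) = eval z (Φ f) := by
      intro z hz
      rw [hΦ, eval_Phi, eval_Phi]
      exact hgev (σ z) ⟨z, hz, rfl⟩
    have := hL.2 (Φ f) (Φ g) hgL h1
    rwa [hΦ, totalDegree_Phi, totalDegree_Phi] at this
  · -- same degSup
    unfold degSup
    congr 1
    ext d
    constructor
    · rintro ⟨g, hg, rfl⟩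
      exact ⟨Φ g, hg, (totalDegree_Phi σ g).symm ▸ rfl⟩
    · rintro ⟨g, hg, rfl⟩
      refine ⟨Phi σ.symm.toLinearMap g, ?_, ?_⟩
      · simpa [Submodule.mem_comap, hΦ, Phi_Phi_symm] using hg
      · rw [← totalDegree_Phi σ (Phi σ.symm.toLinearMap g), ← hΦ, Phi_Phi_symm]

end MuInv

/-- **Invariance of the minimal interpolation degree under linear automorphisms.** -/
theorem mu_linear_invariant {s : ℕ} (S : Set (Fin s → ℝ)) (hS : S.Finite)
    (σ : (Fin s → ℝ) ≃ₗ[ℝ] (Fin s → ℝ)) :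
    mu (σ '' S) = mu S := by
  unfold mu
  congr 1
  ext d
  constructor
  · rintro ⟨L, hL, rfl⟩
    obtain ⟨L', hL', hdeg⟩ := MuInv.transport (σ '' S) σ.symm L hL
    have hset : (σ.symm : (Fin s → ℝ) → (Fin s → ℝ)) '' ((σ : (Fin s → ℝ) → (Fin s → ℝ)) '' S)
        = S := by
      ext x
      simp [Set.mem_image]
    rw [hset] at hL'
    exact ⟨L', hL', hdeg⟩
  · rintro ⟨L, hL, rfl⟩
    obtain ⟨L', hL', hdeg⟩ := MuInv.transport S σ L hL
    exact ⟨L', hL', hdeg⟩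
end
end

section
/- Weakly balanced arrays yield balanced composition counts (concrete form of Lemma 4.3): Let (X, {R₀,…,R_s}) be a commutative association scheme with s ≥ 1 classes, fix x₀ ∈ X and n ≥ 2, let α ∈ ℕ^s with |α| ≤ n, let 1 ≤ t ≤ n, and let C be a nonempty subset of (X^n)_α that is a weakly t-balanced array over the scheme with respect to x₀. Then for every β ∈ ℕ^s with |β| ≤ n and all subsets Λ, Λ' ⊆ {1,…,n} with |Λ| = |Λ'| ≤ t, one has |{(x,y) ∈ C × X^n : supp(y) = Λ and c(y,x) = β}| = |{(x,y) ∈ C × X^n : supp(y) = Λ' and c(y,x) = β}|. -/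
/-!
For `x ∈ C`, the number of words `y` with `supp y = Λ` and `c(y,x) = β` depends only on how many
coordinates of `x` inside and outside `Λ` lie in each class `R_j` relative to `x₀`: a permutation
of the coordinates followed by coordinatewise permutations of `X` that fix `x₀` and preserve the
class relative to `x_ℓ` carries one such set of words onto another. Those coordinatewise
permutations exist because every column sum of every `A_j` is the same, which holds since the
Bose–Mesner algebra has constant diagonal. As `x` has composition `α`, the class counts of `x`
are determined by its composition on `Λ`, and weak balance says that `C` has as many words with
a given composition on `Λ` as on `Λ'`.
-/

open Finset
open scoped Classical

noncomputable section

/-- The 0-1 adjacency matrix of a relation on `X`. -/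
def adjMat {X : Type} [Fintype X] [DecidableEq X] (R : Set (X × X)) : Matrix X X ℂ :=
  fun x y => if (x, y) ∈ R then 1 else 0

/-- A commutative association scheme with `s` classes on a finite set `X`. -/
structure CommAssocScheme (X : Type) [Fintype X] [DecidableEq X] (s : ℕ) where
  R : Fin (s + 1) → Set (X × X)
  rel_nonempty : ∀ i, (R i).Nonempty
  rel_disjoint : ∀ i j, i ≠ j → R i ∩ R j = ∅
  rel_cover : ∀ p : X × X, ∃ i, p ∈ R i
  rel_diag : R 0 = {p : X × X | p.1 = p.2}
  transpose_closed : ∀ i, ∃ j, {p : X × X | (p.2, p.1) ∈ R i} = R j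
  adj_comm : ∀ i j, adjMat (R i) * adjMat (R j) = adjMat (R j) * adjMat (R i)
  adj_span : ∀ i j, adjMat (R i) * adjMat (R j) ∈
    Submodule.span ℂ (Set.range fun k => adjMat (R k))

/-- The composition `c(x,y) ∈ ℕ^s` of two words `x, y ∈ X^n`. -/
def comp {X : Type} [Fintype X] [DecidableEq X] {s : ℕ} (A : CommAssocScheme X s)
    {n : ℕ} (x y : Fin n → X) : Fin s → ℕ :=
  fun i => (univ.filter fun ℓ => (x ℓ, y ℓ) ∈ A.R i.succ).card

theorem exists_perm_comp_eq_of_card_fiber_eq {α κ : Type*} [Fintype α] [DecidableEq κ]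
    (f g : α → κ) (h : ∀ k, #{a | f a = k} = #{a | g a = k}) :
    ∃ e : Equiv.Perm α, ∀ a, g (e a) = f a :=
  ⟨Equiv.ofFiberEquiv fun k => Fintype.equivOfCardEq <| by
      simpa only [Fintype.card_subtype] using h k,
    Equiv.ofFiberEquiv_map _⟩

theorem Finset.sum_eq_sum_of_card_fiber_eq {α κ M : Type*} [DecidableEq κ] [AddCommMonoid M]
    {s : Finset α} {f g : α → κ} (h : ∀ k, #{a ∈ s | f a = k} = #{a ∈ s | g a = k})
    {u w : α → M} (huw : ∀ a ∈ s, ∀ b ∈ s, g b = f a → w b = u a) :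
    ∑ a ∈ s, u a = ∑ a ∈ s, w a := by
  have hsub : ∀ (p : α → Prop) [DecidablePred p], #{a : s | p a} = #{a ∈ s | p a} := by
    intro p _
    rw [univ_eq_attach, filter_attach, card_map, card_attach]
  obtain ⟨e, he⟩ := exists_perm_comp_eq_of_card_fiber_eq (fun a : s => f a) (fun a => g a)
    fun k => by rw [hsub (f · = k), hsub (g · = k), h]
  rw [← sum_coe_sort s u, ← sum_coe_sort s w, ← Equiv.sum_comp e (fun a => w a)]
  exact sum_congr rfl fun a _ => (huw a a.2 (e a) (e a).2 (he a)).symm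

namespace CommAssocScheme

variable {X : Type} [Fintype X] [DecidableEq X] {s : ℕ} (A : CommAssocScheme X s)

theorem eq_of_mem_R {p : X × X} {i j : Fin (s + 1)} (hi : p ∈ A.R i) (hj : p ∈ A.R j) :
    i = j := by
  by_contra hij
  simpa [A.rel_disjoint i j hij] using Set.mem_inter hi hj

def classOf (y z : X) : Fin (s + 1) := (A.rel_cover (y, z)).choose

theorem classOf_eq_iff {y z : X} {j : Fin (s + 1)} : A.classOf y z = j ↔ (y, z) ∈ A.R j :=
  ⟨fun h => h ▸ (A.rel_cover (y, z)).choose_spec,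
    A.eq_of_mem_R (A.rel_cover (y, z)).choose_spec⟩

theorem adjMat_apply_self (k : Fin (s + 1)) (w : X) :
    adjMat (A.R k) w w = if k = 0 then 1 else 0 := by
  have h0 : (w, w) ∈ A.R 0 := by rw [A.rel_diag]; rfl
  by_cases hk : k = 0
  · simp [adjMat, hk, h0]
  · simp only [adjMat, hk, if_false, ite_eq_right_iff, one_ne_zero, imp_false]
    exact fun hw => hk (A.eq_of_mem_R hw h0)

theorem apply_self_eq_of_mem_span {M : Matrix X X ℂ}
    (hM : M ∈ Submodule.span ℂ (Set.range fun k => adjMat (A.R k))) (w w' : X) :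
    M w w = M w' w' := by
  induction hM using Submodule.span_induction with
  | mem M hM =>
    obtain ⟨k, rfl⟩ := hM
    simp only [adjMat_apply_self]
  | zero => rfl
  | add M N _ _ hM hN => simp [hM, hN]
  | smul c M _ hM => simp [hM]

theorem sum_adjMat : ∑ k, adjMat (A.R k) = Matrix.of fun _ _ => 1 := by
  ext y z
  rw [Matrix.sum_apply, Finset.sum_eq_single (A.classOf y z)]
  · simp [adjMat, (A.classOf_eq_iff).mp rfl]
  · intro k _ hk
    simp only [adjMat, ite_eq_right_iff, one_ne_zero, imp_false]
    exact fun h => hk ((A.classOf_eq_iff).mpr h).symm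
  · simp

/-- `J * A_j` (with `J` the all-ones matrix) lies in the Bose–Mesner algebra, whose elements
have constant diagonal, and its diagonal entry at `z` is the column sum of `A_j` at `z`. -/
theorem card_filter_classOf_eq (j : Fin (s + 1)) (z z' : X) :
    #{v | A.classOf v z = j} = #{v | A.classOf v z' = j} := by
  have hmem : (∑ k, adjMat (A.R k)) * adjMat (A.R j) ∈
      Submodule.span ℂ (Set.range fun k => adjMat (A.R k)) := by
    rw [Finset.sum_mul]
    exact Submodule.sum_mem _ fun k _ => A.adj_span k j
  have hcol : ∀ w, ((∑ k, adjMat (A.R k)) * adjMat (A.R j)) w w = #{v | A.classOf v w = j} := by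
    intro w
    simp [sum_adjMat, Matrix.mul_apply, adjMat, Finset.sum_boole, A.classOf_eq_iff]
  exact_mod_cast (hcol z).symm.trans ((A.apply_self_eq_of_mem_span hmem z z').trans (hcol z'))

theorem classOf_swap_apply {a b z : X} (h : A.classOf a z = A.classOf b z) (v : X) :
    A.classOf (Equiv.swap a b v) z = A.classOf v z := by
  rcases eq_or_ne v a with rfl | hva
  · rw [Equiv.swap_apply_left, h]
  rcases eq_or_ne v b with rfl | hvb
  · rw [Equiv.swap_apply_right, h]
  · rw [Equiv.swap_apply_of_ne_of_ne hva hvb]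

theorem exists_perm_classOf_eq {x₀ z z' : X} (hz : A.classOf x₀ z = A.classOf x₀ z') :
    ∃ ψ : Equiv.Perm X, ψ x₀ = x₀ ∧ ∀ v, A.classOf (ψ v) z' = A.classOf v z := by
  obtain ⟨φ, hφ⟩ := exists_perm_comp_eq_of_card_fiber_eq (A.classOf · z) (A.classOf · z')
    fun j => A.card_filter_classOf_eq j z z'
  -- `φ` need not fix `x₀`, but `φ x₀` and `x₀` have the same class relative to `z'`.
  have hswap : A.classOf (φ x₀) z' = A.classOf x₀ z' := (hφ x₀).trans hz
  refine ⟨φ.trans (Equiv.swap (φ x₀) x₀), by simp, fun v => ?_⟩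
  rw [Equiv.trans_apply, A.classOf_swap_apply hswap, hφ]

variable (x₀ : X) {n : ℕ}

def suppCompCount (Λ : Finset (Fin n)) (β : Fin s → ℕ) (x : Fin n → X) : ℕ :=
  #{y : Fin n → X | (univ.filter fun ℓ => y ℓ ≠ x₀) = Λ ∧ comp A y x = β}

theorem card_filter_product_eq_sum_suppCompCount (C : Finset (Fin n → X))
    (Λ : Finset (Fin n)) (β : Fin s → ℕ) :
    #{p ∈ C ×ˢ (univ : Finset (Fin n → X)) |
        (univ.filter fun ℓ => p.2 ℓ ≠ x₀) = Λ ∧ comp A p.2 p.1 = β} =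
      ∑ x ∈ C, suppCompCount A x₀ Λ β x := by
  simp only [card_filter, sum_product, suppCompCount]

theorem comp_comp_perm (σ : Equiv.Perm (Fin n)) (y x : Fin n → X) :
    comp A (y ∘ σ) (x ∘ σ) = comp A y x :=
  funext fun _ => card_equiv σ (by simp)

variable {A x₀}

theorem suppCompCount_comp_perm {Λ Λ' : Finset (Fin n)} {σ : Equiv.Perm (Fin n)}
    (hσ : ∀ ℓ, ℓ ∈ Λ ↔ σ ℓ ∈ Λ') (β : Fin s → ℕ) (x : Fin n → X) :
    suppCompCount A x₀ Λ β (x ∘ σ) = suppCompCount A x₀ Λ' β x := by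
  refine (card_equiv (σ.symm.arrowCongr (Equiv.refl X)) fun y => ?_).symm
  have hy : σ.symm.arrowCongr (Equiv.refl X) y = y ∘ σ := rfl
  have hsupp : (univ.filter fun ℓ => y (σ ℓ) ≠ x₀) = Λ ↔
      (univ.filter fun ℓ => y ℓ ≠ x₀) = Λ' := by
    simp only [Finset.ext_iff, mem_filter, mem_univ, true_and, hσ]
    exact σ.forall_congr (fun _ => Iff.rfl)
  simp only [mem_filter, mem_univ, true_and, hy, comp_comp_perm, Function.comp_apply, hsupp]

theorem suppCompCount_congr {x x' : Fin n → X}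
    (h : ∀ ℓ, A.classOf x₀ (x ℓ) = A.classOf x₀ (x' ℓ)) (Λ : Finset (Fin n)) (β : Fin s → ℕ) :
    suppCompCount A x₀ Λ β x = suppCompCount A x₀ Λ β x' := by
  choose ψ hψx₀ hψ using fun ℓ => A.exists_perm_classOf_eq (h ℓ)
  refine card_equiv (Equiv.piCongrRight ψ) fun y => ?_
  have hsupp : ∀ ℓ, ψ ℓ (y ℓ) ≠ x₀ ↔ y ℓ ≠ x₀ := fun ℓ => by
    conv_lhs => rw [← hψx₀ ℓ]
    exact (ψ ℓ).injective.ne_iff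
  have hcomp : comp A (fun ℓ => ψ ℓ (y ℓ)) x' = comp A y x := by
    funext i
    refine congrArg card (filter_congr fun ℓ _ => ?_)
    rw [← A.classOf_eq_iff, ← A.classOf_eq_iff, hψ]
  have hy : Equiv.piCongrRight ψ y = fun ℓ => ψ ℓ (y ℓ) := rfl
  simp only [mem_filter, mem_univ, true_and, hy, hsupp, hcomp]

variable (A x₀)

def classCount (x : Fin n → X) (S : Finset (Fin n)) (j : Fin (s + 1)) : ℕ :=
  #{ℓ ∈ S | (x₀, x ℓ) ∈ A.R j}

theorem sum_classCount (x : Fin n → X) (S : Finset (Fin n)) :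
    ∑ j, classCount A x₀ x S j = #S := by
  rw [card_eq_sum_card_fiberwise (f := fun ℓ => A.classOf x₀ (x ℓ)) fun _ _ => mem_univ _]
  simp only [classCount, A.classOf_eq_iff]

theorem sum_classCount_succ_le (x : Fin n → X) (S : Finset (Fin n)) :
    ∑ i : Fin s, classCount A x₀ x S i.succ ≤ #S := by
  rw [← sum_classCount A x₀ x S, Fin.sum_univ_succ]
  exact Nat.le_add_left _ _

theorem classCount_add_classCount_compl (x : Fin n → X) (S : Finset (Fin n))
    (j : Fin (s + 1)) :
    classCount A x₀ x S j + classCount A x₀ x Sᶜ j = classCount A x₀ x univ j := by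
  rw [classCount, classCount, classCount, ← card_union_of_disjoint
    (disjoint_filter_filter disjoint_compl_right), ← filter_union, union_compl]

variable {A x₀}

theorem classCount_eq_of_succ {x x' : Fin n → X} {S S' : Finset (Fin n)} (hS : #S = #S')
    (h : ∀ i : Fin s, classCount A x₀ x S i.succ = classCount A x₀ x' S' i.succ) :
    classCount A x₀ x S = classCount A x₀ x' S' := by
  funext j
  cases j using Fin.cases with
  | zero =>
    have hsum := sum_classCount A x₀ x S
    have hsum' := sum_classCount A x₀ x' S'
    rw [Fin.sum_univ_succ, sum_congr rfl fun i _ => h i] at hsum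
    rw [Fin.sum_univ_succ] at hsum'
    omega
  | succ i => exact h i

theorem suppCompCount_eq_of_classCount_eq {x x' : Fin n → X} {Λ Λ' : Finset (Fin n)}
    (hin : classCount A x₀ x Λ = classCount A x₀ x' Λ')
    (hout : classCount A x₀ x Λᶜ = classCount A x₀ x' Λ'ᶜ) (β : Fin s → ℕ) :
    suppCompCount A x₀ Λ β x = suppCompCount A x₀ Λ' β x' := by
  obtain ⟨σ, hσ⟩ := exists_perm_comp_eq_of_card_fiber_eq
    (fun ℓ => (decide (ℓ ∈ Λ), A.classOf x₀ (x ℓ)))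
    (fun ℓ => (decide (ℓ ∈ Λ'), A.classOf x₀ (x' ℓ))) <| by
      rintro ⟨_ | _, j⟩
      all_goals
        simp only [Prod.mk.injEq, decide_eq_false_iff_not, decide_eq_true_eq, ← mem_compl,
          A.classOf_eq_iff, ← filter_filter, filter_mem_eq_inter, univ_inter]
      exacts [congrFun hout j, congrFun hin j]
  simp only [Prod.mk.injEq, decide_eq_decide] at hσ
  calc suppCompCount A x₀ Λ β x = suppCompCount A x₀ Λ β (x' ∘ σ) :=
        suppCompCount_congr (fun ℓ => (hσ ℓ).2.symm) Λ β
    _ = suppCompCount A x₀ Λ' β x' := suppCompCount_comp_perm (fun ℓ => (hσ ℓ).1.symm) β x'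

theorem suppCompCount_eq_of_comp_eq {x x' : Fin n → X} {Λ Λ' : Finset (Fin n)}
    (hx : comp A (fun _ => x₀) x = comp A (fun _ => x₀) x') (hΛ : #Λ = #Λ')
    (hγ : ∀ i : Fin s, classCount A x₀ x Λ i.succ = classCount A x₀ x' Λ' i.succ)
    (β : Fin s → ℕ) :
    suppCompCount A x₀ Λ β x = suppCompCount A x₀ Λ' β x' := by
  have huniv : classCount A x₀ x univ = classCount A x₀ x' univ :=
    classCount_eq_of_succ rfl fun i => congrFun hx i
  have hin := classCount_eq_of_succ hΛ hγ
  refine suppCompCount_eq_of_classCount_eq hin (funext fun j => ?_) β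
  have := classCount_add_classCount_compl A x₀ x Λ j
  have := classCount_add_classCount_compl A x₀ x' Λ' j
  have := congrFun huniv j
  have := congrFun hin j
  omega

end CommAssocScheme

open CommAssocScheme

theorem weakly_balanced_comp_counts_general {X : Type} [Fintype X] [DecidableEq X] {s : ℕ}
    (A : CommAssocScheme X s) (x₀ : X) {n : ℕ}
    (α : Fin s → ℕ) (t : ℕ)
    (C : Finset (Fin n → X))
    (hCα : ∀ x ∈ C, comp A (fun _ => x₀) x = α)
    (hbal : ∀ (Λ Λ' : Finset (Fin n)) (γ : Fin s → ℕ),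
      (∑ i, γ i) ≤ Λ.card → Λ.card = Λ'.card → Λ.card ≤ t →
      (C.filter fun x =>
        ∀ i : Fin s, (Λ.filter fun ℓ => (x₀, x ℓ) ∈ A.R i.succ).card = γ i).card =
      (C.filter fun x =>
        ∀ i : Fin s, (Λ'.filter fun ℓ => (x₀, x ℓ) ∈ A.R i.succ).card = γ i).card) :
    ∀ β : Fin s → ℕ, (∑ i, β i) ≤ n → ∀ Λ Λ' : Finset (Fin n),
      Λ.card = Λ'.card → Λ.card ≤ t →
      ((C ×ˢ (univ : Finset (Fin n → X))).filter fun p =>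
        (univ.filter fun ℓ => p.2 ℓ ≠ x₀) = Λ ∧ comp A p.2 p.1 = β).card =
      ((C ×ˢ (univ : Finset (Fin n → X))).filter fun p =>
        (univ.filter fun ℓ => p.2 ℓ ≠ x₀) = Λ' ∧ comp A p.2 p.1 = β).card := by
  intro β _ Λ Λ' hΛ hΛt
  rw [card_filter_product_eq_sum_suppCompCount, card_filter_product_eq_sum_suppCompCount]
  refine sum_eq_sum_of_card_fiber_eq (f := fun x i => classCount A x₀ x Λ i.succ)
    (g := fun x i => classCount A x₀ x Λ' i.succ) (fun γ => ?_)
    fun x hx x' hx' hxx' => (suppCompCount_eq_of_comp_eq ((hCα x hx).trans (hCα x' hx').symm)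
      hΛ (fun i => (congrFun hxx' i).symm) β).symm
  by_cases hγ : ∑ i, γ i ≤ #Λ
  · simp only [funext_iff]
    exact hbal Λ Λ' γ hγ hΛ hΛt
  · rw [filter_false_of_mem, filter_false_of_mem]
    · rintro x - rfl
      exact hγ (hΛ ▸ sum_classCount_succ_le A x₀ x Λ')
    · rintro x - rfl
      exact hγ (sum_classCount_succ_le A x₀ x Λ)

/-- **Weakly balanced arrays yield balanced composition counts** (a concrete form of
Lemma 4.3): if `C ⊆ (X^n)_α` is a weakly `t`-balanced array with respect to `x₀`, then
for every `β` the number of pairs `(x, y) ∈ C × X^n` with `supp(y) = Λ` and `c(y,x) = β`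
depends only on `|Λ|`, for `|Λ| ≤ t`. -/
theorem weakly_balanced_comp_counts {X : Type} [Fintype X] [DecidableEq X] {s : ℕ}
    (hs : 1 ≤ s) (A : CommAssocScheme X s) (x₀ : X) {n : ℕ} (hn : 2 ≤ n)
    (α : Fin s → ℕ) (hα : (∑ i, α i) ≤ n) (t : ℕ) (ht1 : 1 ≤ t) (htn : t ≤ n)
    (C : Finset (Fin n → X)) (hCne : C.Nonempty)
    (hCα : ∀ x ∈ C, comp A (fun _ => x₀) x = α)
    (hbal : ∀ (Λ Λ' : Finset (Fin n)) (γ : Fin s → ℕ),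
      (∑ i, γ i) ≤ Λ.card → Λ.card = Λ'.card → Λ.card ≤ t →
      (C.filter fun x =>
        ∀ i : Fin s, (Λ.filter fun ℓ => (x₀, x ℓ) ∈ A.R i.succ).card = γ i).card =
      (C.filter fun x =>
        ∀ i : Fin s, (Λ'.filter fun ℓ => (x₀, x ℓ) ∈ A.R i.succ).card = γ i).card) :
    ∀ β : Fin s → ℕ, (∑ i, β i) ≤ n → ∀ Λ Λ' : Finset (Fin n),
      Λ.card = Λ'.card → Λ.card ≤ t →
      ((C ×ˢ (univ : Finset (Fin n → X))).filter fun p =>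
        (univ.filter fun ℓ => p.2 ℓ ≠ x₀) = Λ ∧ comp A p.2 p.1 = β).card =
      ((C ×ˢ (univ : Finset (Fin n → X))).filter fun p =>
        (univ.filter fun ℓ => p.2 ℓ ≠ x₀) = Λ' ∧ comp A p.2 p.1 = β).card :=
  weakly_balanced_comp_counts_general A x₀ α t C hCα hbal
end
end
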